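/- arXiv:2402.09600 — 2 statements merged into one kernel-verified Lean document; each statement's English description precedes it below -/
import Mathlib

section
/- Let N, d, C be positive integers, H ∈ ℝ^{N×d}, L ⊆ {1,…,N} with |L| = m ≥ 1, and let Y, Ỹ, Nse ∈ ℝ^{N×C} satisfy Y = Ỹ + Nse. Let K_{L,L} = [H]_L [H]_L^T ∈ ℝ^{m×m}, let η be a real number, and define the gradient-descent iterates W^{(0)} = 0 ∈ ℝ^{d×C} and W^{(t)} = W^{(t−1)} − η [H]_L^T ([H]_L W^{(t−1)} − [Y]_L) for t ≥ 1. Then for every t ≥ 1, [H]_L W^{(t)} − [Ỹ]_L = −(I_m − η K_{L,L})^t [Ỹ]_L + η K_{L,L} ∑_{t'=0}^{t−1} (I_m − η K_{L,L})^{t'} [Nse]_L. -/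
open Matrix

/-- The row-submatrix `[A]_L` of `A` consisting of the rows indexed by `L`. -/
def rowSub {N k : ℕ} (A : Matrix (Fin N) (Fin k) ℝ) (L : Finset (Fin N)) :
    Matrix {i : Fin N // i ∈ L} (Fin k) ℝ :=
  A.submatrix (fun i => (i : Fin N)) id

/-- Closed form of the gradient-descent residual: for every `t ≥ 1`,
`[H]_L W^{(t)} − [Ỹ]_L = −(I − η K_{L,L})^t [Ỹ]_L
    + η K_{L,L} ∑_{t'=0}^{t−1} (I − η K_{L,L})^{t'} [Nse]_L`. -/
theorem gd_closed_form_recursion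
    {N d C : ℕ} (hN : 0 < N) (hd : 0 < d) (hC : 0 < C)
    (H : Matrix (Fin N) (Fin d) ℝ)
    (L : Finset (Fin N)) (hm : 1 ≤ L.card)
    (Y Ytil Nse : Matrix (Fin N) (Fin C) ℝ)
    (hY : Y = Ytil + Nse)
    (η : ℝ)
    (W : ℕ → Matrix (Fin d) (Fin C) ℝ)
    (hW0 : W 0 = 0)
    (hWrec : ∀ t : ℕ,
      W (t + 1) = W t - η • ((rowSub H L)ᵀ * (rowSub H L * W t - rowSub Y L))) :
    ∀ t : ℕ, 1 ≤ t →
      rowSub H L * W t - rowSub Ytil L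
        = -((1 - η • (rowSub H L * (rowSub H L)ᵀ)) ^ t * rowSub Ytil L)
          + η • (rowSub H L * (rowSub H L)ᵀ
              * ∑ t' ∈ Finset.range t,
                  (1 - η • (rowSub H L * (rowSub H L)ᵀ)) ^ t' * rowSub Nse L) := by
  set A := rowSub H L with hA
  set K := A * Aᵀ with hK
  set M := (1 : Matrix _ _ ℝ) - η • K with hM
  set Yt := rowSub Ytil L with hYt
  set Ns := rowSub Nse L with hNs
  have hYL : rowSub Y L = Yt + Ns := by
    subst hY; simp [rowSub, hYt, hNs]; ext i j; simp [Matrix.add_apply]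
  have hMK : M * K = K * M := by
    simp only [hM, sub_mul, mul_sub, one_mul, mul_one, Matrix.smul_mul, Matrix.mul_smul]
  have key : ∀ t : ℕ,
      A * W t - Yt
        = -(M ^ t * Yt) + η • (K * ∑ t' ∈ Finset.range t, M ^ t' * Ns) := by
    intro t
    induction t with
    | zero => simp [hW0]
    | succ t ih =>
      have hrec : A * W (t + 1) - Yt
          = M * (A * W t - Yt) + η • (K * Ns) := by
        rw [hWrec t, hYL]
        simp only [Matrix.mul_sub, Matrix.mul_smul, hM, ← Matrix.mul_assoc, ← hK,
          Matrix.sub_mul, Matrix.one_mul, Matrix.smul_mul]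
        simp only [Matrix.mul_add, smul_sub, smul_add]
        abel
      rw [hrec, ih]
      rw [Finset.sum_range_succ']
      have hshift : ∀ i : ℕ, M ^ (i + 1) * Ns = M * (M ^ i * Ns) := by
        intro i; rw [pow_succ', Matrix.mul_assoc]
      simp only [hshift, pow_zero, Matrix.one_mul]
      rw [Matrix.mul_add, Matrix.mul_neg, Matrix.mul_smul, ← Matrix.mul_assoc M,
        ← pow_succ']
      rw [← Matrix.mul_sum,
        Matrix.mul_add, ← Matrix.mul_assoc K M, ← hMK, Matrix.mul_assoc, smul_add]
      rw [add_assoc]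
      simp only [hK, Matrix.mul_assoc]
  intro t _
  exact key t
end

section
/- Let m, u be positive integers, let K ∈ ℝ^{N×N} be symmetric positive semidefinite with ordered eigenvalues λ̂_1 ≥ … ≥ λ̂_N ≥ 0 and λ̂_1 > 0, and let K_F = K³ / λ̂_1². Define the kernel complexity KC(M) = min_{r₀ ∈ {1,…,N}} [ r₀(1/u + 1/m) + √(‖M‖_{r₀}) (1/√u + 1/√m) ] for any symmetric positive semidefinite M ∈ ℝ^{N×N}, where ‖M‖_{r₀} is the sum of all but the r₀ largest eigenvalues of M. Then KC(K_F) ≤ KC(K). -/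
open Matrix

/-- Truncated nuclear norm `‖M‖_{r₀} = ∑_{i=r₀+1}^N μ_i` (in terms of the ordered
eigenvalues `mu 0 = μ_1, …, mu (N-1) = μ_N`). -/
def tnn {N : ℕ} (mu : Fin N → ℝ) (r₀ : ℕ) : ℝ :=
  ∑ i ∈ Finset.univ.filter (fun i : Fin N => r₀ ≤ (i : ℕ)), mu i

/-- Kernel complexity
`KC(M) = min_{r₀ ∈ {1,…,N}} [ r₀(1/u + 1/m) + √(‖M‖_{r₀})(1/√u + 1/√m) ]`,
expressed in terms of the ordered eigenvalues `mu` of `M`. -/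
noncomputable def kernelComplexity {N : ℕ} (hN : 0 < N) (m u : ℕ)
    (mu : Fin N → ℝ) : ℝ :=
  Finset.inf' (Finset.Icc 1 N) (Finset.nonempty_Icc.mpr hN)
    (fun r₀ =>
      (r₀ : ℝ) * (1 / (u : ℝ) + 1 / (m : ℝ))
        + Real.sqrt (tnn mu r₀) * (1 / Real.sqrt (u : ℝ) + 1 / Real.sqrt (m : ℝ)))

/-- The LR-Attention layer reduces the kernel complexity:
`KC(K_F) ≤ KC(K)` where `K_F = K³/λ̂₁²` has ordered eigenvalues `λ̂_i³/λ̂₁²`. -/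
theorem lr_attention_kernel_complexity_domination
    {N : ℕ} (hN : 0 < N)
    (m u : ℕ) (hm : 0 < m) (hu : 0 < u)
    (K : Matrix (Fin N) (Fin N) ℝ) (hpsd : K.PosSemidef)
    (lam : Fin N → ℝ) (hlam_mono : Antitone lam) (hlam_nonneg : ∀ i, 0 ≤ lam i)
    (hspec : ∃ U : Matrix (Fin N) (Fin N) ℝ,
      Uᵀ * U = 1 ∧ K = U * Matrix.diagonal lam * Uᵀ)
    (hlam1 : 0 < lam ⟨0, hN⟩)
    (mu : Fin N → ℝ) (hmu : ∀ i, mu i = lam i ^ 3 / lam ⟨0, hN⟩ ^ 2) :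
    kernelComplexity hN m u mu ≤ kernelComplexity hN m u lam := by
  have hle : ∀ i, mu i ≤ lam i := by
    intro i
    rw [hmu i, div_le_iff₀ (by positivity)]
    have h1 : lam i ≤ lam ⟨0, hN⟩ := hlam_mono (by simp [Fin.le_def])
    have h2 : 0 ≤ lam i := hlam_nonneg i
    calc lam i ^ 3 = lam i * lam i ^ 2 := by ring
      _ ≤ lam i * lam ⟨0, hN⟩ ^ 2 :=
        mul_le_mul_of_nonneg_left (pow_le_pow_left₀ h2 h1 2) h2
  unfold kernelComplexity
  apply Finset.le_inf'
  intro r₀ hr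
  refine (Finset.inf'_le _ hr).trans ?_
  gcongr
  · exact Finset.sum_le_sum fun i _ => hle i
  all_goals positivity
end
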